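/- arXiv:2409.19682 — 3 statements merged into one kernel-verified Lean document; each statement's English description precedes it below -/
import Mathlib

section
/- With the Proposition-1 data, if Q satisfies the reality constraint Q − Q̄ = X_ζ̄ − X̄_ζ + w_ζ̄·X − w̄_ζ·X̄ (as functions on ℂ), then the pulled-back first Cartan structure equation for the real coframe leg holds: dK = (−q̄ dζ̄) ∧ M + (−q dζ) ∧ M̄ + Γ₃₄ ∧ K. -/
noncomputable section
open Complex

/-- Points of `N = ℝ × ℂ`, coordinates `(r, ζ)`. -/
abbrev Pt : Type := ℝ × ℂ

/-- Complex-valued 1-forms on `N`. -/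
abbrev Form1 : Type := Pt → (Pt →L[ℝ] ℂ)

/-- Exterior derivative of a 1-form: `dω(p)(u,v) = (Dω(p)u)(v) − (Dω(p)v)(u)`. -/
def extd (ω : Form1) (p u v : Pt) : ℂ :=
  (fderiv ℝ ω p u) v - (fderiv ℝ ω p v) u

/-- Wedge product of 1-forms evaluated on two vectors. -/
def wedge (α β : Form1) (p u v : Pt) : ℂ :=
  α p u * β p v - α p v * β p u

/-- The constant 1-form `dr` : `(u₁,u₂) ↦ u₁`. -/
def dr : Pt →L[ℝ] ℂ := Complex.ofRealCLM.comp (ContinuousLinearMap.fst ℝ ℝ ℂ)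

/-- The constant 1-form `dζ` : `(u₁,u₂) ↦ u₂`. -/
def dz : Pt →L[ℝ] ℂ := ContinuousLinearMap.snd ℝ ℝ ℂ

/-- The constant 1-form `dζ̄` : `(u₁,u₂) ↦ conj u₂`. -/
def dzb : Pt →L[ℝ] ℂ :=
  Complex.conjCLE.toContinuousLinearMap.comp (ContinuousLinearMap.snd ℝ ℝ ℂ)

/-- Wirtinger derivative `f_ζ = ½(∂f/∂x − i ∂f/∂y)`. -/
def wirtZ (f : ℂ → ℂ) (z : ℂ) : ℂ :=
  (fderiv ℝ f z 1 - Complex.I * fderiv ℝ f z Complex.I) / 2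

/-- Wirtinger derivative `f_ζ̄ = ½(∂f/∂x + i ∂f/∂y)`. -/
def wirtZb (f : ℂ → ℂ) (z : ℂ) : ℂ :=
  (fderiv ℝ f z 1 + Complex.I * fderiv ℝ f z Complex.I) / 2

/-- `w̄ = conj ∘ w`. -/
def cj (w : ℂ → ℂ) : ℂ → ℂ := fun z => (starRingEnd ℂ) (w z)

/-- Proposition 1 coframe leg `M = e^w dζ`. -/
def M1 (w : ℂ → ℂ) : Form1 := fun p => Complex.exp (w p.2) • dz

/-- Proposition 1 coframe leg `M̄ = e^{w̄} dζ̄`. -/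
def Mbar1 (w : ℂ → ℂ) : Form1 := fun p => Complex.exp ((starRingEnd ℂ) (w p.2)) • dzb

/-- Proposition 1 coframe leg `K = dr + (X + r w̄_ζ) dζ + (X̄ + r w_ζ̄) dζ̄`. -/
def K1 (w X : ℂ → ℂ) : Form1 := fun p =>
  dr + (X p.2 + (p.1 : ℂ) * wirtZ (cj w) p.2) • dz
     + ((starRingEnd ℂ) (X p.2) + (p.1 : ℂ) * wirtZb w p.2) • dzb

/-- Proposition 1 connection form `Γ₁₂ = −w̄_ζ dζ + w_ζ̄ dζ̄`. -/
def Γ₁₂ (w : ℂ → ℂ) : Form1 := fun p =>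
  (-(wirtZ (cj w) p.2)) • dz + (wirtZb w p.2) • dzb

/-- Proposition 1 connection form `Γ₃₄ = −w̄_ζ dζ − w_ζ̄ dζ̄`. -/
def Γ₃₄ (w : ℂ → ℂ) : Form1 := fun p =>
  (-(wirtZ (cj w) p.2)) • dz + (-(wirtZb w p.2)) • dzb

/-- Proposition 1 function `q = ((R/8)e^w + (w̄_ζ)_ζ̄ e^{−w̄}) r + Q e^{−w̄}`. -/
def qfun (R : ℝ) (w Q : ℂ → ℂ) : Pt → ℂ := fun p =>
  (((R : ℂ) / 8) * Complex.exp (w p.2)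
      + wirtZb (wirtZ (cj w)) p.2 * Complex.exp (-(starRingEnd ℂ) (w p.2))) * (p.1 : ℂ)
    + Q p.2 * Complex.exp (-(starRingEnd ℂ) (w p.2))

/-- Proposition 1 connection form `Γ₂₃ = q dζ`. -/
def Γ₂₃ (R : ℝ) (w Q : ℂ → ℂ) : Form1 := fun p => qfun R w Q p • dz

lemma linmap_eval (L : ℂ →L[ℝ] ℂ) (u : ℂ) :
    L u = (L 1 - Complex.I * L Complex.I) / 2 * u
        + (L 1 + Complex.I * L Complex.I) / 2 * (starRingEnd ℂ) u := by
  have hL : L u = (u.re : ℂ) * L 1 + (u.im : ℂ) * L Complex.I := by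
    rw [← Complex.real_smul, ← Complex.real_smul, ← map_smul, ← map_smul, ← map_add]
    congr 1
    simp [Complex.real_smul]
  have h2 : u = (u.re : ℂ) + (u.im : ℂ) * Complex.I := (Complex.re_add_im u).symm
  have h1 : (starRingEnd ℂ) u = (u.re : ℂ) - (u.im : ℂ) * Complex.I := by
    simp [Complex.ext_iff]
  rw [hL, h1]
  linear_combination (-(L 1 - Complex.I * L Complex.I)/2) * h2
    + ((u.im : ℂ) * L Complex.I) * Complex.I_sq

lemma fderiv_wirt (f : ℂ → ℂ) (z u : ℂ) :
    fderiv ℝ f z u = wirtZ f z * u + wirtZb f z * (starRingEnd ℂ) u :=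
  linmap_eval (fderiv ℝ f z) u

lemma fderiv_cj (f : ℂ → ℂ) (z : ℂ) (u : ℂ) :
    fderiv ℝ (cj f) z u = (starRingEnd ℂ) (fderiv ℝ f z u) := by
  have h : cj f = ⇑Complex.conjCLE ∘ f := by funext t; simp [cj]
  rw [h, Complex.conjCLE.comp_fderiv]
  simp

lemma wirtZ_cj_eq (f : ℂ → ℂ) (z : ℂ) :
    wirtZ (cj f) z = (starRingEnd ℂ) (wirtZb f z) := by
  unfold wirtZ wirtZb
  rw [fderiv_cj, fderiv_cj]
  simp [Complex.conj_I, map_ofNat]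
  try ring

lemma wirtZb_cj_eq (f : ℂ → ℂ) (z : ℂ) :
    wirtZb (cj f) z = (starRingEnd ℂ) (wirtZ f z) := by
  unfold wirtZ wirtZb
  rw [fderiv_cj, fderiv_cj]
  simp [Complex.conj_I, map_ofNat]
  try ring

lemma conj_wirt2 (w : ℂ → ℂ) (z : ℂ) :
    (starRingEnd ℂ) (wirtZb (wirtZ (cj w)) z) = wirtZ (wirtZb w) z := by
  have h : wirtZ (cj w) = cj (wirtZb w) := by
    funext t; rw [wirtZ_cj_eq]; rfl
  rw [h, wirtZb_cj_eq]
  simp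

lemma contDiff_cj {f : ℂ → ℂ} (hf : ContDiff ℝ (⊤ : ℕ∞) f) : ContDiff ℝ (⊤ : ℕ∞) (cj f) := by
  have h : cj f = ⇑Complex.conjCLE ∘ f := by funext t; simp [cj]
  rw [h]
  exact Complex.conjCLE.contDiff.comp hf

lemma contDiff_wirtZ {f : ℂ → ℂ} (hf : ContDiff ℝ (⊤ : ℕ∞) f) : ContDiff ℝ (⊤ : ℕ∞) (wirtZ f) := by
  have h := hf.fderiv_right (m := (⊤ : ℕ∞)) (by simp)
  unfold wirtZ
  exact ((h.clm_apply contDiff_const).sub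
    (contDiff_const.mul (h.clm_apply contDiff_const))).div_const 2

lemma contDiff_wirtZb {f : ℂ → ℂ} (hf : ContDiff ℝ (⊤ : ℕ∞) f) : ContDiff ℝ (⊤ : ℕ∞) (wirtZb f) := by
  have h := hf.fderiv_right (m := (⊤ : ℕ∞)) (by simp)
  unfold wirtZb
  exact ((h.clm_apply contDiff_const).add
    (contDiff_const.mul (h.clm_apply contDiff_const))).div_const 2

lemma contDiff_coeff {f g : ℂ → ℂ} (hf : ContDiff ℝ (⊤ : ℕ∞) f) (hg : ContDiff ℝ (⊤ : ℕ∞) g) :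
    ContDiff ℝ (⊤ : ℕ∞) (fun q : Pt => f q.2 + (q.1 : ℂ) * g q.2) :=
  (hf.comp contDiff_snd).add
    ((Complex.ofRealCLM.contDiff.comp contDiff_fst).mul (hg.comp contDiff_snd))

lemma fderiv_coeff {f g : ℂ → ℂ} (hf : ContDiff ℝ (⊤ : ℕ∞) f) (hg : ContDiff ℝ (⊤ : ℕ∞) g) (p u : Pt) :
    fderiv ℝ (fun q : Pt => f q.2 + (q.1 : ℂ) * g q.2) p u
      = fderiv ℝ f p.2 u.2 + (u.1 : ℂ) * g p.2 + (p.1 : ℂ) * fderiv ℝ g p.2 u.2 := by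
  have h1 : HasFDerivAt (fun q : Pt => f q.2)
      ((fderiv ℝ f p.2).comp (ContinuousLinearMap.snd ℝ ℝ ℂ)) p :=
    ((hf.differentiable (by simp) p.2).hasFDerivAt).comp p hasFDerivAt_snd
  have h2 : HasFDerivAt (fun q : Pt => ((q.1 : ℝ) : ℂ)) dr p := dr.hasFDerivAt
  have h3 : HasFDerivAt (fun q : Pt => g q.2)
      ((fderiv ℝ g p.2).comp (ContinuousLinearMap.snd ℝ ℝ ℂ)) p :=
    ((hg.differentiable (by simp) p.2).hasFDerivAt).comp p hasFDerivAt_snd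
  have h5 := h1.add (h2.mul h3)
  rw [HasFDerivAt.fderiv (f := fun q : Pt => f q.2 + (q.1 : ℂ) * g q.2) h5]
  simp [dr, ContinuousLinearMap.add_apply, ContinuousLinearMap.comp_apply,
    ContinuousLinearMap.smul_apply, smul_eq_mul]
  ring

lemma fderiv_K1_apply {w X : ℂ → ℂ} (hw : ContDiff ℝ (⊤ : ℕ∞) w) (hX : ContDiff ℝ (⊤ : ℕ∞) X) (p u : Pt) :
    fderiv ℝ (K1 w X) p u
      = (fderiv ℝ (fun q : Pt => X q.2 + (q.1 : ℂ) * wirtZ (cj w) q.2) p u) • dz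
      + (fderiv ℝ (fun q : Pt =>
            (starRingEnd ℂ) (X q.2) + (q.1 : ℂ) * wirtZb w q.2) p u) • dzb := by
  have hc : HasFDerivAt (fun q : Pt => X q.2 + (q.1 : ℂ) * wirtZ (cj w) q.2)
      (fderiv ℝ (fun q : Pt => X q.2 + (q.1 : ℂ) * wirtZ (cj w) q.2) p) p :=
    ((contDiff_coeff hX (contDiff_wirtZ (contDiff_cj hw))).differentiable (by simp) p).hasFDerivAt
  have hd : HasFDerivAt (fun q : Pt => (starRingEnd ℂ) (X q.2) + (q.1 : ℂ) * wirtZb w q.2)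
      (fderiv ℝ (fun q : Pt => (starRingEnd ℂ) (X q.2) + (q.1 : ℂ) * wirtZb w q.2) p) p :=
    ((contDiff_coeff (contDiff_cj hX) (contDiff_wirtZb hw)).differentiable (by simp) p).hasFDerivAt
  have hK : HasFDerivAt (K1 w X)
      (((fderiv ℝ (fun q : Pt => X q.2 + (q.1 : ℂ) * wirtZ (cj w) q.2) p).smulRight dz)
        + ((fderiv ℝ (fun q : Pt =>
            (starRingEnd ℂ) (X q.2) + (q.1 : ℂ) * wirtZb w q.2) p).smulRight dzb)) p := by
    have := ((hasFDerivAt_const dr p).add (hc.smul_const dz)).add (hd.smul_const dzb)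
    rw [zero_add] at this; exact this
  rw [hK.fderiv]
  simp [ContinuousLinearMap.add_apply, ContinuousLinearMap.smulRight_apply]


/-- With the Proposition-1 data and the reality constraint
`Q − Q̄ = X_ζ̄ − X̄_ζ + w_ζ̄ X − w̄_ζ X̄`, the pulled-back first Cartan structure equation
for the real coframe leg holds: `dK = (−q̄ dζ̄) ∧ M + (−q dζ) ∧ M̄ + Γ₃₄ ∧ K`. -/
theorem prop1_first_cartan_real_leg (R : ℝ) (w X Q : ℂ → ℂ)
    (hw : ContDiff ℝ (⊤ : ℕ∞) w) (hX : ContDiff ℝ (⊤ : ℕ∞) X) (hQ : ContDiff ℝ (⊤ : ℕ∞) Q)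
    (hreal : ∀ z : ℂ, Q z - (starRingEnd ℂ) (Q z)
      = wirtZb X z - wirtZ (cj X) z + wirtZb w z * X z
        - wirtZ (cj w) z * (starRingEnd ℂ) (X z)) :
    ∀ p u v : Pt,
      extd (K1 w X) p u v
        = wedge (fun p => (-(starRingEnd ℂ) (qfun R w Q p)) • dzb) (M1 w) p u v
          + wedge (fun p => (-(qfun R w Q p)) • dz) (Mbar1 w) p u v
          + wedge (Γ₃₄ w) (K1 w X) p u v := by
  intro p u v
  have hG := contDiff_wirtZ (contDiff_cj hw)
  have hH := contDiff_wirtZb hw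
  have hc : ∀ z : ℂ, (starRingEnd ℂ) (X z) = cj X z := fun _ => rfl
  rw [extd, fderiv_K1_apply hw hX p u, fderiv_K1_apply hw hX p v]
  simp only [hc]
  rw [fderiv_coeff hX hG p u, fderiv_coeff hX hG p v,
      fderiv_coeff (contDiff_cj hX) hH p u, fderiv_coeff (contDiff_cj hX) hH p v]
  rw [fderiv_wirt X p.2 u.2, fderiv_wirt X p.2 v.2,
      fderiv_wirt (cj X) p.2 u.2, fderiv_wirt (cj X) p.2 v.2,
      fderiv_wirt (wirtZ (cj w)) p.2 u.2, fderiv_wirt (wirtZ (cj w)) p.2 v.2,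
      fderiv_wirt (wirtZb w) p.2 u.2, fderiv_wirt (wirtZb w) p.2 v.2]
  simp only [wedge, M1, Mbar1, Γ₃₄, K1, qfun, dz, dzb, dr,
    ContinuousLinearMap.add_apply, ContinuousLinearMap.smul_apply,
    ContinuousLinearMap.coe_comp', Function.comp_apply,
    ContinuousLinearMap.coe_fst', ContinuousLinearMap.coe_snd',
    Complex.ofRealCLM_apply, ContinuousLinearEquiv.coe_coe, Complex.conjCLE_apply,
    smul_eq_mul, neg_mul, hc]
  simp only [map_add, map_sub, map_mul, map_neg, map_div₀, map_ofNat,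
    Complex.conj_ofReal, Complex.conj_conj, ← Complex.exp_conj, conj_wirt2]
  have hr := hreal p.2
  simp only [cj] at hr ⊢
  have h1 : Complex.exp (w p.2) * Complex.exp (-(w p.2)) = 1 := by
    rw [← Complex.exp_add]; simp
  have h2 : Complex.exp ((starRingEnd ℂ) (w p.2))
      * Complex.exp (-((starRingEnd ℂ) (w p.2))) = 1 := by
    rw [← Complex.exp_add]; simp
  linear_combination
    ((starRingEnd ℂ) v.2 * u.2 - (starRingEnd ℂ) u.2 * v.2) * hr
    + (((starRingEnd ℂ) u.2 * v.2 - (starRingEnd ℂ) v.2 * u.2)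
        * ((p.1 : ℂ) * wirtZ (wirtZb w) p.2 + (starRingEnd ℂ) (Q p.2))) * h1
    + (-((starRingEnd ℂ) u.2 * v.2 - (starRingEnd ℂ) v.2 * u.2)
        * ((p.1 : ℂ) * wirtZb (wirtZ (cj w)) p.2 + Q p.2)) * h2
end
end

section
/- With the Proposition-1 data, define Ψ₂ := R/24 + (w̄_ζ)_ζ̄·e^{−(w+w̄)} and Ψ₃ := e^{−(w+w̄)}·( q_ζ̄ − ((R/8)e^w + (w̄_ζ)_ζ̄ e^{−w̄})·(X̄ + r·w_ζ̄) ). Then the pulled-back second Cartan structure equation for Γ₂₃ in an Einstein spacetime holds: dΓ₂₃ = (Γ₁₂ + Γ₃₄) ∧ Γ₂₃ − Ψ₃·(M ∧ M̄) + (Ψ₂ + R/12)·(K ∧ M). -/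
noncomputable section
open Complex

/-- Wirtinger `ζ̄`-derivative of a function on `N`, taken at fixed `r`. -/
def wirtZbN (f : Pt → ℂ) (p : Pt) : ℂ := wirtZb (fun z => f (p.1, z)) p.2

/-- Proposition 1 Weyl scalar `Ψ₂ = R/24 + (w̄_ζ)_ζ̄ e^{−(w+w̄)}`. -/
def Psi2 (R : ℝ) (w : ℂ → ℂ) : Pt → ℂ := fun p =>
  (R : ℂ) / 24 + wirtZb (wirtZ (cj w)) p.2
    * Complex.exp (-(w p.2 + (starRingEnd ℂ) (w p.2)))

/-- Proposition 1 Weyl scalar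
`Ψ₃ = e^{−(w+w̄)} ( q_ζ̄ − ((R/8)e^w + (w̄_ζ)_ζ̄ e^{−w̄}) (X̄ + r w_ζ̄) )`. -/
def Psi3 (R : ℝ) (w X Q : ℂ → ℂ) : Pt → ℂ := fun p =>
  Complex.exp (-(w p.2 + (starRingEnd ℂ) (w p.2)))
    * (wirtZbN (qfun R w Q) p
        - (((R : ℂ) / 8) * Complex.exp (w p.2)
            + wirtZb (wirtZ (cj w)) p.2 * Complex.exp (-(starRingEnd ℂ) (w p.2)))
          * ((starRingEnd ℂ) (X p.2) + (p.1 : ℂ) * wirtZb w p.2))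

-- auxiliary lemmas
def gfun (R : ℝ) (w : ℂ → ℂ) : ℂ → ℂ := fun z =>
  ((R : ℂ) / 8) * Complex.exp (w z)
    + wirtZb (wirtZ (cj w)) z * Complex.exp (-(starRingEnd ℂ) (w z))

def hfun (w Q : ℂ → ℂ) : ℂ → ℂ := fun z => Q z * Complex.exp (-(starRingEnd ℂ) (w z))

lemma qfun_eq (R : ℝ) (w Q : ℂ → ℂ) :
    qfun R w Q = fun p => gfun R w p.2 * (p.1 : ℂ) + hfun w Q p.2 := rfl

lemma contDiff_cj_s2 {w : ℂ → ℂ} (hw : ContDiff ℝ (⊤ : ℕ∞) w) : ContDiff ℝ (⊤ : ℕ∞) (cj w) :=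
  Complex.conjCLE.contDiff.comp hw

lemma contDiff_fderiv_apply {f : ℂ → ℂ} (hf : ContDiff ℝ (⊤ : ℕ∞) f) (c : ℂ) :
    ContDiff ℝ (⊤ : ℕ∞) (fun z => fderiv ℝ f z c) :=
  (hf.fderiv_right (by simp)).clm_apply contDiff_const

lemma contDiff_gfun {R : ℝ} {w : ℂ → ℂ} (hw : ContDiff ℝ (⊤ : ℕ∞) w) :
    ContDiff ℝ (⊤ : ℕ∞) (gfun R w) := by
  unfold gfun
  have h1 := contDiff_wirtZb (contDiff_wirtZ (contDiff_cj_s2 hw))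
  have h2 : ContDiff ℝ (⊤ : ℕ∞) (fun z => Complex.exp (-(starRingEnd ℂ) (w z))) :=
    Complex.contDiff_exp.comp (contDiff_cj_s2 hw).neg
  exact (contDiff_const.mul (Complex.contDiff_exp.comp hw)).add (h1.mul h2)

lemma contDiff_hfun {w Q : ℂ → ℂ} (hw : ContDiff ℝ (⊤ : ℕ∞) w) (hQ : ContDiff ℝ (⊤ : ℕ∞) Q) :
    ContDiff ℝ (⊤ : ℕ∞) (hfun w Q) := by
  unfold hfun
  exact hQ.mul (Complex.contDiff_exp.comp (contDiff_cj_s2 hw).neg)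

set_option maxHeartbeats 4000000 in
/-- With the Proposition-1 data, the pulled-back second Cartan structure
equation for `Γ₂₃` in an Einstein spacetime holds:
`dΓ₂₃ = (Γ₁₂ + Γ₃₄) ∧ Γ₂₃ − Ψ₃ (M ∧ M̄) + (Ψ₂ + R/12) (K ∧ M)`. -/
theorem prop1_second_cartan_Γ₂₃ (R : ℝ) (w X Q : ℂ → ℂ)
    (hw : ContDiff ℝ (⊤ : ℕ∞) w) (hX : ContDiff ℝ (⊤ : ℕ∞) X) (hQ : ContDiff ℝ (⊤ : ℕ∞) Q) :
    ∀ p u v : Pt,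
      extd (Γ₂₃ R w Q) p u v
        = wedge (fun p => Γ₁₂ w p + Γ₃₄ w p) (Γ₂₃ R w Q) p u v
          - Psi3 R w X Q p * wedge (M1 w) (Mbar1 w) p u v
          + (Psi2 R w p + (R : ℂ) / 12) * wedge (K1 w X) (M1 w) p u v := by

  intro p u v
  have hg : Differentiable ℝ (gfun R w) := (contDiff_gfun hw).differentiable (by simp)
  have hh : Differentiable ℝ (hfun w Q) := (contDiff_hfun hw hQ).differentiable (by simp)
  set Dg := fderiv ℝ (gfun R w) p.2 with hDgdef
  set Dh := fderiv ℝ (hfun w Q) p.2 with hDhdef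
  -- derivative of qfun
  have hq : HasFDerivAt (qfun R w Q)
      ((gfun R w p.2 • dr + ((p.1:ℂ) • Dg.comp (ContinuousLinearMap.snd ℝ ℝ ℂ)))
        + Dh.comp (ContinuousLinearMap.snd ℝ ℝ ℂ)) p := by
    rw [qfun_eq]
    have h1 : HasFDerivAt (fun p : Pt => gfun R w p.2)
        (Dg.comp (ContinuousLinearMap.snd ℝ ℝ ℂ)) p :=
      ((hg p.2).hasFDerivAt).comp p (hasFDerivAt_snd)
    have h2 : HasFDerivAt (fun p : Pt => ((p.1:ℝ) : ℂ)) dr p := dr.hasFDerivAt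
    have h3 : HasFDerivAt (fun p : Pt => hfun w Q p.2)
        (Dh.comp (ContinuousLinearMap.snd ℝ ℝ ℂ)) p :=
      ((hh p.2).hasFDerivAt).comp p (hasFDerivAt_snd)
    exact (h1.mul h2).add h3
  have hDq : ∀ a : Pt, fderiv ℝ (qfun R w Q) p a
      = gfun R w p.2 * (a.1 : ℂ) + (p.1:ℂ) * Dg a.2 + Dh a.2 := by
    intro a
    rw [hq.fderiv]
    simp [dr, smul_eq_mul, mul_comm, add_assoc]
  -- derivative of Γ₂₃
  have hΓ : ∀ a b : Pt, (fderiv ℝ (Γ₂₃ R w Q) p a) b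
      = (gfun R w p.2 * (a.1 : ℂ) + (p.1:ℂ) * Dg a.2 + Dh a.2) * b.2 := by
    intro a b
    have hq' : DifferentiableAt ℝ (qfun R w Q) p := hq.differentiableAt
    have h5 : HasFDerivAt (Γ₂₃ R w Q) ((fderiv ℝ (qfun R w Q) p).smulRight dz) p := by
      have := hq'.hasFDerivAt.smul (hasFDerivAt_const dz p)
      simp only [smul_zero, zero_add] at this
      exact this
    rw [h5.fderiv]
    simp [hDq a, dz, smul_eq_mul]
  -- the ζ̄-Wirtinger derivative of qfun at fixed r
  have hwbN : wirtZbN (qfun R w Q) p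
      = (((p.1:ℂ) * Dg 1 + Dh 1) + Complex.I * ((p.1:ℂ) * Dg Complex.I + Dh Complex.I)) / 2 := by
    have hs : HasFDerivAt (fun z => qfun R w Q (p.1, z)) (((p.1:ℂ) • Dg) + Dh) p.2 := by
      have h6 := ((hg p.2).hasFDerivAt.mul_const ((p.1:ℝ):ℂ)).add (hh p.2).hasFDerivAt
      exact h6
    unfold wirtZbN wirtZb
    rw [hs.fderiv]
    simp [smul_eq_mul]
  -- real-linearity decomposition
  have hlin : ∀ (L : ℂ →L[ℝ] ℂ) (c : ℂ), L c = (c.re:ℂ) * L 1 + (c.im:ℂ) * L Complex.I := by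
    intro L c
    have hc : c = c.re • (1:ℂ) + c.im • Complex.I := by
      simpa [Complex.real_smul] using (Complex.re_add_im c).symm
    have h7 : L c = L (c.re • (1:ℂ) + c.im • Complex.I) := by rw [← hc]
    rw [h7, map_add, map_smul, map_smul, Complex.real_smul, Complex.real_smul]
  -- helper abbreviations
  have h1 : Complex.exp (w p.2) ≠ 0 := Complex.exp_ne_zero _
  have h2 : Complex.exp ((starRingEnd ℂ) (w p.2)) ≠ 0 := Complex.exp_ne_zero _
  have hE : Complex.exp (-(w p.2 + (starRingEnd ℂ) (w p.2)))
      = (Complex.exp (w p.2) * Complex.exp ((starRingEnd ℂ) (w p.2)))⁻¹ := by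
    rw [Complex.exp_neg, Complex.exp_add]
  have hEb : Complex.exp (-(starRingEnd ℂ) (w p.2))
      = (Complex.exp ((starRingEnd ℂ) (w p.2)))⁻¹ := by
    rw [Complex.exp_neg]
  -- the Γ wedge term vanishes
  have key0 : wedge (fun p => Γ₁₂ w p + Γ₃₄ w p) (Γ₂₃ R w Q) p u v = 0 := by
    simp only [wedge, Γ₁₂, Γ₃₄, Γ₂₃, ContinuousLinearMap.add_apply,
      ContinuousLinearMap.coe_smul', Pi.smul_apply, ContinuousLinearMap.neg_apply,
      smul_eq_mul, dz, dzb, ContinuousLinearMap.coe_comp', Function.comp_apply,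
      ContinuousLinearMap.coe_snd', ContinuousLinearEquiv.coe_coe, Complex.conjCLE_apply]
    ring
  -- the Ψ₃ wedge term
  have key1 : Psi3 R w X Q p * wedge (M1 w) (Mbar1 w) p u v
      = (wirtZbN (qfun R w Q) p
          - gfun R w p.2 * ((starRingEnd ℂ) (X p.2) + (p.1:ℂ) * wirtZb w p.2))
        * (u.2 * (starRingEnd ℂ) v.2 - v.2 * (starRingEnd ℂ) u.2) := by
    simp only [Psi3, M1, Mbar1, wedge, gfun, ContinuousLinearMap.coe_smul', Pi.smul_apply,
      smul_eq_mul, dz, dzb, ContinuousLinearMap.coe_comp', Function.comp_apply,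
      ContinuousLinearMap.coe_snd', ContinuousLinearEquiv.coe_coe, Complex.conjCLE_apply,
      hE, hEb]
    field_simp
  -- the Ψ₂ wedge term
  have key2 : (Psi2 R w p + (R:ℂ)/12) * wedge (K1 w X) (M1 w) p u v
      = gfun R w p.2 * (((u.1:ℂ) * v.2 - (v.1:ℂ) * u.2)
          + ((starRingEnd ℂ) (X p.2) + (p.1:ℂ) * wirtZb w p.2)
            * ((starRingEnd ℂ) u.2 * v.2 - (starRingEnd ℂ) v.2 * u.2)) := by
    simp only [Psi2, K1, M1, wedge, gfun, ContinuousLinearMap.add_apply,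
      ContinuousLinearMap.coe_smul', Pi.smul_apply, smul_eq_mul, dz, dzb, dr,
      ContinuousLinearMap.coe_comp', Function.comp_apply, ContinuousLinearMap.coe_snd',
      ContinuousLinearMap.coe_fst', Complex.ofRealCLM_apply,
      ContinuousLinearEquiv.coe_coe, Complex.conjCLE_apply, hE, hEb]
    field_simp
    ring
  -- put everything together
  rw [extd, hΓ, hΓ, key0, key1, key2, hwbN]
  obtain ⟨xu, yu, hu2⟩ : ∃ x y : ℝ, u.2 = (x:ℂ) + (y:ℂ) * Complex.I :=
    ⟨_, _, (Complex.re_add_im u.2).symm⟩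
  obtain ⟨xv, yv, hv2⟩ : ∃ x y : ℝ, v.2 = (x:ℂ) + (y:ℂ) * Complex.I :=
    ⟨_, _, (Complex.re_add_im v.2).symm⟩
  have hlin' : ∀ (L : ℂ →L[ℝ] ℂ) (x y : ℝ),
      L ((x:ℂ) + (y:ℂ) * Complex.I) = (x:ℂ) * L 1 + (y:ℂ) * L Complex.I := by
    intro L x y
    have hxy : (x:ℂ) + (y:ℂ) * Complex.I = x • (1:ℂ) + y • Complex.I := by
      simp [Complex.real_smul]
    rw [hxy, map_add, map_smul, map_smul, Complex.real_smul, Complex.real_smul]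
  have hconj' : ∀ x y : ℝ, (starRingEnd ℂ) ((x:ℂ) + (y:ℂ) * Complex.I)
      = (x:ℂ) - (y:ℂ) * Complex.I := by
    intro x y; simp [Complex.ext_iff]
  simp only [hu2, hv2, hlin', hconj']
  ring_nf
  simp only [Complex.I_sq]
  ring
end
end

section
/- With the Proposition-1 data and Ψ₂ := R/24 + (w̄_ζ)_ζ̄·e^{−(w+w̄)}, the pulled-back second Cartan structure equation for Γ₁₂ + Γ₃₄ in an Einstein spacetime holds (with Γ₁₄ = 0 and Ψ₁ = 0): d(Γ₁₂ + Γ₃₄) = 2·(Ψ₂ − R/24)·(M ∧ M̄). -/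
noncomputable section
open Complex

lemma contDiff_wirtZ_s3 (g : ℂ → ℂ) (hg : ContDiff ℝ (⊤ : ℕ∞) g) : ContDiff ℝ (⊤ : ℕ∞) (wirtZ g) := by
  have h1 : ContDiff ℝ (⊤ : ℕ∞) (fun z => fderiv ℝ g z 1) :=
    (hg.fderiv_right (by simp)).clm_apply contDiff_const
  have h2 : ContDiff ℝ (⊤ : ℕ∞) (fun z => fderiv ℝ g z Complex.I) :=
    (hg.fderiv_right (by simp)).clm_apply contDiff_const
  exact ((h1.sub (contDiff_const.mul h2)).div_const 2)

lemma wirt_decomp_aux (f : ℂ → ℂ) (z : ℂ) (x y : ℝ) :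
    fderiv ℝ f z ((x : ℂ) + (y : ℂ) * Complex.I)
      = wirtZ f z * ((x : ℂ) + (y : ℂ) * Complex.I)
        + wirtZb f z * (starRingEnd ℂ) ((x : ℂ) + (y : ℂ) * Complex.I) := by
  have hx : fderiv ℝ f z ((x : ℂ) + (y : ℂ) * Complex.I)
      = (x : ℝ) • fderiv ℝ f z 1 + (y : ℝ) • fderiv ℝ f z Complex.I := by
    conv_lhs => rw [show ((x : ℂ) + (y : ℂ) * Complex.I)
      = (x : ℝ) • (1 : ℂ) + (y : ℝ) • Complex.I by simp [Complex.ext_iff]]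
    rw [map_add, map_smul, map_smul]
  rw [hx, wirtZ, wirtZb,
    show (starRingEnd ℂ) ((x : ℂ) + (y : ℂ) * Complex.I)
      = (x : ℂ) - (y : ℂ) * Complex.I by simp [Complex.ext_iff]]
  simp only [Complex.real_smul]
  linear_combination ((y : ℂ) * fderiv ℝ f z Complex.I) * Complex.I_mul_I

lemma wirt_decomp (f : ℂ → ℂ) (z h : ℂ) :
    fderiv ℝ f z h = wirtZ f z * h + wirtZb f z * (starRingEnd ℂ) h := by
  have := wirt_decomp_aux f z h.re h.im
  simpa [Complex.re_add_im] using this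

/-- With the Proposition-1 data, the pulled-back second Cartan structure
equation for `Γ₁₂ + Γ₃₄` in an Einstein spacetime holds (with `Γ₁₄ = 0` and `Ψ₁ = 0`):
`d(Γ₁₂ + Γ₃₄) = 2 (Ψ₂ − R/24) (M ∧ M̄)`. -/
theorem prop1_second_cartan_Γ₁₂_plus_Γ₃₄ (R : ℝ) (w X Q : ℂ → ℂ)
    (hw : ContDiff ℝ (⊤ : ℕ∞) w) (hX : ContDiff ℝ (⊤ : ℕ∞) X) (hQ : ContDiff ℝ (⊤ : ℕ∞) Q) :
    ∀ p u v : Pt,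
      extd (fun p => Γ₁₂ w p + Γ₃₄ w p) p u v
        = 2 * (Psi2 R w p - (R : ℂ) / 24) * wedge (M1 w) (Mbar1 w) p u v := by
  intro p u v
  set f : ℂ → ℂ := wirtZ (cj w) with hf
  have hcj : ContDiff ℝ (⊤ : ℕ∞) (cj w) := Complex.conjCLE.contDiff.comp hw
  have hfC : ContDiff ℝ (⊤ : ℕ∞) f := contDiff_wirtZ_s3 _ hcj
  have hωeq : (fun p : Pt => Γ₁₂ w p + Γ₃₄ w p) = fun p : Pt => ((-2 : ℂ) * f p.2) • dz := by
    funext p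
    refine ContinuousLinearMap.ext fun x => ?_
    simp [Γ₁₂, Γ₃₄, dz, dzb]
    ring
  rw [extd, hωeq]
  -- derivative computation
  have hc : ∀ q : Pt, HasFDerivAt (fun p : Pt => (-2 : ℂ) * f p.2)
      ((((-2 : ℂ) • (fderiv ℝ f q.2)).comp (ContinuousLinearMap.snd ℝ ℝ ℂ))) q := by
    intro q
    have h1 : HasFDerivAt f (fderiv ℝ f q.2) q.2 :=
      (hfC.differentiable (by simp) q.2).hasFDerivAt
    have h2 := (h1.comp q ((ContinuousLinearMap.snd ℝ ℝ ℂ).hasFDerivAt)).const_smul (-2 : ℂ)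
    have e1 : ((-2 : ℂ) • fderiv ℝ f q.2).comp (ContinuousLinearMap.snd ℝ ℝ ℂ)
        = (-2 : ℂ) • (fderiv ℝ f q.2).comp (ContinuousLinearMap.snd ℝ ℝ ℂ) := by
      ext x <;> simp
    rw [e1]
    exact h2
  have hsmul : ∀ q : Pt, HasFDerivAt (fun p : Pt => ((-2 : ℂ) * f p.2) • dz)
      (((((-2 : ℂ) • (fderiv ℝ f q.2)).comp (ContinuousLinearMap.snd ℝ ℝ ℂ))).smulRight dz) q :=
    fun q => (hc q).smul_const dz
  rw [(hsmul p).fderiv]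
  have key : ∀ a b : Pt,
      ((((((-2 : ℂ) • (fderiv ℝ f p.2)).comp (ContinuousLinearMap.snd ℝ ℝ ℂ))).smulRight dz) a) b
        = (-2 : ℂ) * (wirtZ f p.2 * a.2 + wirtZb f p.2 * (starRingEnd ℂ) a.2) * b.2 := by
    intro a b
    simp [dz, wirt_decomp f p.2 a.2]
  rw [key u v, key v u]
  simp only [Psi2, M1, Mbar1, wedge, dz, dzb, ContinuousLinearMap.smul_apply,
    ContinuousLinearMap.coe_comp', Function.comp_apply, ContinuousLinearMap.coe_snd',
    ContinuousLinearEquiv.coe_coe, smul_eq_mul, Complex.exp_add, Complex.exp_neg]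
  have hne : Complex.exp (w p.2) * Complex.exp ((starRingEnd ℂ) (w p.2)) ≠ 0 :=
    mul_ne_zero (Complex.exp_ne_zero _) (Complex.exp_ne_zero _)
  have hfb : wirtZb (wirtZ (cj w)) p.2 = wirtZb f p.2 := rfl
  rw [hfb]
  simp only [Complex.conjCLE_apply]
  field_simp
  ring
end
end
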